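/- For all real a > 0 and b > 0, ∫_0^∞ e^{−a t} · J_{1/2}(b t) · t^{−1/2} dt = √(2/(π b)) · arcsin( b/√(b² + a²) ), where J_{1/2}(y) = ∑_{m=0}^∞ (−1)^m/(m!·Γ(m+3/2))·(y/2)^{2m+1/2}. -/

import Mathlib

/-!
Comparing the series with that of `sin` gives `J_{1/2}(y) = √(2 / (π y)) sin y`, so the integral
is `√(2 / (π b))` times `∫₀^∞ e^{-at} sin(bt) / t dt`. Writing `e^{-at} / t = ∫_a^∞ e^{-st} ds`
and exchanging the integrals (Fubini), the inner integral is the Laplace transform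
`b / (s² + b²)` of `sin (b t)`, whose integral over `(a, ∞)` is `arctan (b / a)`,
i.e. `arcsin (b / √(b² + a²))`.
-/

open Real MeasureTheory

/-- The Bessel function of the first kind of order 1/2, defined by its series. -/
noncomputable def besselJhalf (y : ℝ) : ℝ :=
  ∑' m : ℕ, (-1) ^ m / (m.factorial * Real.Gamma (m + 3/2)) *
    (y / 2) ^ (2 * (m : ℝ) + 1/2)

open Set Filter Topology
open scoped Nat

lemma factorial_mul_Gamma_nat_add_three_halves (m : ℕ) :
    (m ! : ℝ) * Gamma (m + 3 / 2) = (2 * m + 1)! * √π / 2 ^ (2 * m + 1) := by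
  have h := Gamma_nat_add_one_add_half m
  rw [show (m : ℝ) + 1 + 1 / 2 = m + 3 / 2 by ring] at h
  rw [h, Nat.factorial_eq_mul_doubleFactorial, Nat.doubleFactorial_two_mul]
  push_cast
  field_simp
  ring

lemma besselJhalf_eq_sqrt_mul_sin {y : ℝ} (hy : 0 < y) :
    besselJhalf y = √(2 / (π * y)) * sin y := by
  rw [besselJhalf, sin_eq_tsum, ← tsum_mul_left]
  congr 1 with m
  have hpow : (y / 2) ^ (2 * (m : ℝ) + 1 / 2) = (y / 2) ^ (2 * m) * √(y / 2) := by
    rw [rpow_add (by positivity), sqrt_eq_rpow, ← rpow_natCast]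
    push_cast
    rfl
  have hsqrt : √(2 / (π * y)) * y = 2 * √(y / 2) / √π := by
    rw [sqrt_div' _ (by positivity : (0 : ℝ) ≤ π * y), sqrt_div' _ zero_le_two,
      sqrt_mul pi_pos.le]
    field_simp
    rw [sq_sqrt zero_le_two, sq_sqrt hy.le]
    ring
  rw [factorial_mul_Gamma_nat_add_three_halves, hpow]
  calc (-1) ^ m / ((2 * m + 1)! * √π / 2 ^ (2 * m + 1)) * ((y / 2) ^ (2 * m) * √(y / 2))
      = (-1) ^ m * y ^ (2 * m) / (2 * m + 1)! * (2 * √(y / 2) / √π) := by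
        rw [div_pow]
        field_simp
        ring
    _ = √(2 / (π * y)) * ((-1) ^ m * y ^ (2 * m + 1) / (2 * m + 1)!) := by
        rw [← hsqrt]
        ring

lemma besselJhalf_mul_rpow_neg_half {b t : ℝ} (hb : 0 < b) (ht : 0 < t) :
    besselJhalf (b * t) * t ^ (-(1 / 2) : ℝ) = √(2 / (π * b)) * (sin (b * t) / t) := by
  have hsqrt : √(2 / (π * (b * t))) = √(2 / (π * b)) / √t := by
    rw [← mul_assoc, ← div_div, sqrt_div' _ ht.le]
  rw [besselJhalf_eq_sqrt_mul_sin (mul_pos hb ht), hsqrt, rpow_neg ht.le, ← sqrt_eq_rpow]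
  field_simp
  rw [sq_sqrt ht.le]

lemma integral_exp_neg_mul_Ioi {t : ℝ} (ht : 0 < t) (a : ℝ) :
    ∫ s in Ioi a, exp (-s * t) = exp (-a * t) / t := by
  simp_rw [neg_mul, mul_comm _ t, ← neg_mul]
  rw [integral_exp_mul_Ioi (neg_lt_zero.2 ht), neg_div_neg_eq]

lemma integral_sin_mul_exp_neg_mul_Ioi {s : ℝ} (hs : 0 < s) (b : ℝ) :
    ∫ t in Ioi (0 : ℝ), sin (b * t) * exp (-s * t) = b / (s ^ 2 + b ^ 2) := by
  set c : ℂ := -s + b * Complex.I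
  have hc : c.re < 0 := by simpa [c] using hs
  have him : ∀ t : ℝ, sin (b * t) * exp (-s * t) = (Complex.exp (c * t)).im := by
    intro t
    simp [c, Complex.exp_im, mul_comm]
  have h := integral_im (𝕜 := ℂ) (integrableOn_exp_mul_complex_Ioi hc 0)
  simp only [RCLike.im_to_complex] at h
  simp_rw [him, h, integral_exp_mul_complex_Ioi hc 0]
  simp [c, Complex.div_im, Complex.normSq_apply]
  ring

lemma integrableOn_div_sq_add_sq_Ioi {a : ℝ} (ha : 0 < a) (b : ℝ) :
    IntegrableOn (fun s => b / (s ^ 2 + b ^ 2)) (Ioi a) := by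
  refine ((integrableOn_Ioi_rpow_of_lt (by norm_num : (-2 : ℝ) < -1) ha).const_mul |b|).mono'
    ((continuousOn_const.div (by fun_prop) fun s hs => ?_).aestronglyMeasurable measurableSet_Ioi)
    ((ae_restrict_mem measurableSet_Ioi).mono fun s hs => ?_)
  · have : 0 < s := ha.trans hs
    positivity
  · have hs : 0 < s := ha.trans hs
    rw [Real.norm_eq_abs, abs_div, abs_of_pos (by positivity : 0 < s ^ 2 + b ^ 2),
      rpow_neg hs.le, rpow_two, ← div_eq_mul_inv]
    gcongr
    nlinarith [sq_nonneg b]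

lemma integral_div_sq_add_sq_Ioi {a : ℝ} (ha : 0 < a) (b : ℝ) :
    ∫ s in Ioi a, b / (s ^ 2 + b ^ 2) = arctan (b / a) := by
  have hderiv : ∀ s ≠ 0, HasDerivAt (fun s => -arctan (b / s)) (b / (s ^ 2 + b ^ 2)) s := by
    intro s hs
    have h := (((hasDerivAt_inv hs).const_mul b).arctan).fun_neg
    simp only [← div_eq_mul_inv] at h
    refine h.congr_deriv ?_
    field_simp
  have hlim : Tendsto (fun s => -arctan (b / s)) atTop (𝓝 (-arctan 0)) :=
    ((continuous_arctan.tendsto 0).comp (tendsto_const_nhds.div_atTop tendsto_id)).neg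
  rw [integral_Ioi_of_hasDerivAt_of_tendsto (hderiv a ha.ne').continuousAt.continuousWithinAt
    (fun s hs => hderiv s (ha.trans hs).ne') (integrableOn_div_sq_add_sq_Ioi ha b) hlim]
  simp

lemma integrable_sin_mul_exp_neg_mul_prod {a : ℝ} (ha : 0 < a) (b : ℝ) :
    Integrable (fun p : ℝ × ℝ => sin (b * p.1) * exp (-p.2 * p.1))
      ((volume.restrict (Ioi 0)).prod (volume.restrict (Ioi a))) := by
  have hmeas : AEStronglyMeasurable (fun p : ℝ × ℝ => sin (b * p.1) * exp (-p.2 * p.1))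
      ((volume.restrict (Ioi 0)).prod (volume.restrict (Ioi a))) :=
    (by fun_prop : Continuous fun p : ℝ × ℝ => sin (b * p.1) * exp (-p.2 * p.1))
      |>.aestronglyMeasurable
  refine (integrable_prod_iff hmeas).2 ⟨?_, ?_⟩
  · filter_upwards [ae_restrict_mem measurableSet_Ioi] with t (ht : 0 < t)
    exact ((exp_neg_integrableOn_Ioi a ht).const_mul (sin (b * t))).congr
      (.of_forall fun s => by simp only [neg_mul, mul_comm t])
  · have hbound : Integrable (fun t => |b| * exp (-a * t)) (volume.restrict (Ioi 0)) :=
      (exp_neg_integrableOn_Ioi 0 ha).const_mul _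
    refine hbound.mono' hmeas.norm.integral_prod_right' ?_
    filter_upwards [ae_restrict_mem measurableSet_Ioi] with t (ht : 0 < t)
    simp only [norm_mul, Real.norm_eq_abs, abs_exp]
    rw [integral_const_mul, integral_exp_neg_mul_Ioi ht, abs_mul, abs_abs,
      abs_of_pos (by positivity : 0 < exp (-a * t) / t)]
    calc |sin (b * t)| * (exp (-a * t) / t) ≤ |b * t| * (exp (-a * t) / t) :=
          mul_le_mul_of_nonneg_right abs_sin_le_abs (by positivity)
      _ = |b| * exp (-a * t) := by
          rw [abs_mul, abs_of_pos ht]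
          field_simp

theorem integral_exp_neg_mul_mul_sin_div {a : ℝ} (ha : 0 < a) (b : ℝ) :
    ∫ t in Ioi (0 : ℝ), exp (-a * t) * (sin (b * t) / t) = arctan (b / a) :=
  calc ∫ t in Ioi (0 : ℝ), exp (-a * t) * (sin (b * t) / t)
      = ∫ t in Ioi (0 : ℝ), ∫ s in Ioi a, sin (b * t) * exp (-s * t) := by
        refine setIntegral_congr_fun measurableSet_Ioi fun t (ht : 0 < t) => ?_
        rw [integral_const_mul, integral_exp_neg_mul_Ioi ht]
        ring
    _ = ∫ s in Ioi a, ∫ t in Ioi (0 : ℝ), sin (b * t) * exp (-s * t) :=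
        integral_integral_swap (integrable_sin_mul_exp_neg_mul_prod ha b)
    _ = ∫ s in Ioi a, b / (s ^ 2 + b ^ 2) :=
        setIntegral_congr_fun measurableSet_Ioi fun s hs =>
          integral_sin_mul_exp_neg_mul_Ioi (ha.trans hs) b
    _ = arctan (b / a) := integral_div_sq_add_sq_Ioi ha b

lemma arctan_div_eq_arcsin {a : ℝ} (ha : 0 < a) (b : ℝ) :
    arctan (b / a) = arcsin (b / √(b ^ 2 + a ^ 2)) := by
  rw [arctan_eq_arcsin, div_pow, one_add_div (by positivity), sqrt_div' _ (sq_nonneg a),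
    sqrt_sq ha.le, add_comm (a ^ 2), div_div_div_cancel_right₀ ha.ne']

theorem laplace_besselJhalf (a b : ℝ) (ha : 0 < a) (hb : 0 < b) :
    ∫ t in Set.Ioi (0:ℝ), Real.exp (-a * t) * besselJhalf (b * t) * t ^ (-(1/2) : ℝ)
      = Real.sqrt (2 / (π * b)) * Real.arcsin (b / Real.sqrt (b ^ 2 + a ^ 2)) := by
  have hintegrand : EqOn (fun t => exp (-a * t) * besselJhalf (b * t) * t ^ (-(1 / 2) : ℝ))
      (fun t => √(2 / (π * b)) * (exp (-a * t) * (sin (b * t) / t))) (Ioi 0) :=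
    fun t (ht : 0 < t) => by
      simp only [mul_assoc, besselJhalf_mul_rpow_neg_half hb ht]
      ring
  rw [setIntegral_congr_fun measurableSet_Ioi hintegrand, integral_const_mul,
    integral_exp_neg_mul_mul_sin_div ha b, arctan_div_eq_arcsin ha]
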